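/- Let f, g ∈ L²(ℝ) with f̂ denoting the Fourier–Plancherel transform. Suppose μ and ν are the probability measures dμ(q) = |f(q)|² dq and dν(p) = |f̂(p)|² dp for some unit vector f ∈ L²(ℝ). Then μ and ν cannot both have bounded support, i.e. it is impossible that both f and f̂ have compact support (unless f = 0). -/

import Mathlib

/-!
If `f` has compact support, its Fourier transform is the restriction to `ℝ` of the entire function
`z ↦ ∫ e^{-2πixz} f(x) dx` (the Fourier–Laplace transform), which can be differentiated under the
integral sign because the kernel is bounded on the support of `f` locally uniformly in `z`. If `𝓕 f`
also has compact support, this entire function vanishes on a real half-line, which has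
accumulation points, so it vanishes identically by the identity theorem. Finally an integrable
function whose Fourier transform vanishes is zero a.e.: pairing it with `𝓕 ψ` for Schwartz `ψ`
gives zero, and such `𝓕 ψ` exhaust the smooth compactly supported test functions.
-/

open MeasureTheory Complex Filter Real Set
open scoped FourierTransform Topology ContDiff SchwartzMap

theorem MeasureTheory.MemLp.integrable_of_hasCompactSupport {X E : Type*} [TopologicalSpace X]
    [MeasurableSpace X] [OpensMeasurableSpace X] [NormedAddCommGroup E] {μ : Measure X}
    [IsLocallyFiniteMeasure μ] {p : ENNReal} {f : X → E} (hf : MemLp f p μ) (hp : 1 ≤ p)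
    (hsupp : HasCompactSupport f) : Integrable f μ :=
  (integrableOn_iff_integrable_of_support_subset (subset_tsupport f)).mp <|
    (hf.locallyIntegrable hp).integrableOn_isCompact hsupp

theorem HasCompactSupport.exists_abs_le_of_ne_zero {M : Type*} [Zero M] {f : ℝ → M}
    (hf : HasCompactSupport f) : ∃ R, ∀ x, f x ≠ 0 → |x| ≤ R := by
  obtain ⟨R, hR⟩ := hf.isBounded.subset_closedBall 0
  exact ⟨R, fun x hx => by simpa using hR (subset_tsupport f hx)⟩

theorem Differentiable.eq_zero_of_forall_gt_ofReal {E : Type*} [NormedAddCommGroup E]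
    [NormedSpace ℂ E] [CompleteSpace E] {g : ℂ → E}
    (hg : Differentiable ℂ g) {a : ℝ} (h : ∀ x : ℝ, a < x → g x = 0) : g = 0 := by
  have hto : Tendsto ((↑) : ℝ → ℂ) (𝓝[>] (a + 1)) (𝓝[≠] ((a + 1 : ℝ) : ℂ)) :=
    continuous_ofReal.continuousWithinAt.tendsto_nhdsWithin fun _ hx =>
      ofReal_injective.ne (mem_Ioi.1 hx).ne'
  have hfreq : ∃ᶠ z in 𝓝[≠] ((a + 1 : ℝ) : ℂ), g z = 0 :=
    hto.frequently <| Eventually.frequently <| eventually_nhdsWithin_of_forall fun x hx =>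
      h x (by linarith [mem_Ioi.1 hx])
  funext z
  exact (analyticOnNhd_univ_iff_differentiable.2 hg).eqOn_zero_of_preconnected_of_frequently_eq_zero
    isPreconnected_univ (mem_univ _) hfreq (mem_univ z)

section FourierUniqueness

variable {V F : Type*} [NormedAddCommGroup V] [InnerProductSpace ℝ V] [FiniteDimensional ℝ V]
  [MeasurableSpace V] [BorelSpace V] [NormedAddCommGroup F] [NormedSpace ℂ F] [CompleteSpace F]

theorem MeasureTheory.Integrable.ae_eq_zero_of_fourier_eq_zero {f : V → F} (hf : Integrable f)
    (h : 𝓕 f = 0) : f =ᵐ[volume] 0 := by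
  refine ae_eq_zero_of_integral_contDiff_smul_eq_zero hf.locallyIntegrable fun φ hφ hφsupp => ?_
  let ψ : 𝓢(V, ℂ) := 𝓕⁻ ((hφsupp.comp_left Complex.ofReal_zero).toSchwartzMap
    (Complex.ofRealCLM.contDiff.comp hφ))
  calc ∫ x, φ x • f x = ∫ x, 𝓕 ⇑ψ x • f x := by
        congr with x
        rw [← SchwartzMap.fourier_coe, FourierTransform.fourier_fourierInv_eq]
        exact (Complex.coe_smul (φ x) (f x)).symm
    _ = ∫ x, ψ x • 𝓕 f x := by
      simpa using! VectorFourier.integral_fourierIntegral_smul_eq_flip (L := innerₗ V)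
        Real.continuous_fourierChar continuous_inner ψ.integrable hf
    _ = 0 := by simp [h]

end FourierUniqueness

section FourierLaplace

variable {E : Type*} [NormedAddCommGroup E] [NormedSpace ℂ E]

noncomputable def fourierLaplace (f : ℝ → E) (z : ℂ) : E :=
  ∫ x : ℝ, cexp (-2 * π * I * x * z) • f x

theorem fourierLaplace_ofReal (f : ℝ → E) (w : ℝ) : fourierLaplace f w = 𝓕 f w := by
  rw [Real.fourier_real_eq_integral_exp_smul, fourierLaplace]
  congr with x
  push_cast
  ring_nf

theorem norm_cexp_neg_two_pi_I_mul_le {x R r : ℝ} {z : ℂ} (hx : |x| ≤ R) (hz : ‖z‖ ≤ r) :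
    ‖cexp (-2 * π * I * x * z)‖ ≤ Real.exp (2 * π * (R * r)) := by
  have hre : (-2 * π * I * x * z).re = 2 * π * (x * z.im) := by
    rw [show -2 * π * I * x * z = ((2 * π * x : ℝ) : ℂ) * -(z * I) by push_cast; ring,
      re_ofReal_mul, neg_re, mul_I_re, neg_neg, mul_assoc]
  have hxz : x * z.im ≤ R * r :=
    calc x * z.im ≤ |x| * |z.im| := by rw [← abs_mul]; exact le_abs_self _
      _ ≤ R * r := mul_le_mul hx ((abs_im_le_norm z).trans hz) (abs_nonneg _)
          ((abs_nonneg x).trans hx)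
  rw [Complex.norm_exp, Real.exp_le_exp, hre]
  gcongr

variable {f : ℝ → E} {R : ℝ}

theorem norm_fourierLaplace_integrand_le (hR : ∀ x, f x ≠ 0 → |x| ≤ R) {r : ℝ} {z : ℂ}
    (hz : ‖z‖ ≤ r) (x : ℝ) :
    ‖cexp (-2 * π * I * x * z) • f x‖ ≤ Real.exp (2 * π * (R * r)) * ‖f x‖ := by
  by_cases hfx : f x = 0
  · simp [hfx]
  rw [norm_smul]
  gcongr
  exact norm_cexp_neg_two_pi_I_mul_le (hR x hfx) hz

theorem norm_fourierLaplace_integrand_deriv_le (hR : ∀ x, f x ≠ 0 → |x| ≤ R) {r : ℝ} {z : ℂ}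
    (hz : ‖z‖ ≤ r) (x : ℝ) : ‖(-2 * π * I * x * cexp (-2 * π * I * x * z)) • f x‖ ≤
      2 * π * R * Real.exp (2 * π * (R * r)) * ‖f x‖ := by
  by_cases hfx : f x = 0
  · simp [hfx]
  have hxR := hR x hfx
  have hx : ‖(-2 * π * I * x : ℂ)‖ = 2 * π * |x| := by simp [abs_of_pos pi_pos]
  rw [norm_smul, norm_mul, hx]
  gcongr
  · exact mul_nonneg (by positivity) ((abs_nonneg x).trans hxR)
  · exact norm_cexp_neg_two_pi_I_mul_le hxR hz

theorem hasDerivAt_fourierLaplace (hf : Integrable f) (hR : ∀ x, f x ≠ 0 → |x| ≤ R) (z₀ : ℂ) :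
    HasDerivAt (fourierLaplace f)
      (∫ x : ℝ, (-2 * π * I * x * cexp (-2 * π * I * x * z₀)) • f x) z₀ := by
  have hball : ∀ z ∈ Metric.ball z₀ 1, ‖z‖ ≤ ‖z₀‖ + 1 := fun z hz =>
    (norm_le_norm_add_norm_sub' z z₀).trans <| by
      rw [← dist_eq_norm]; linarith [Metric.mem_ball.1 hz]
  have hmeas : ∀ z : ℂ, AEStronglyMeasurable (fun x : ℝ => cexp (-2 * π * I * x * z) • f x) :=
    fun z => (Continuous.aestronglyMeasurable (by fun_prop)).smul hf.1
  refine (hasDerivAt_integral_of_dominated_loc_of_deriv_le (Metric.ball_mem_nhds z₀ one_pos)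
    (.of_forall hmeas)
    ((hf.norm.const_mul _).mono' (hmeas z₀)
      (.of_forall (norm_fourierLaplace_integrand_le hR le_rfl)))
    ((Continuous.aestronglyMeasurable (by fun_prop)).smul hf.1)
    (.of_forall fun (x : ℝ) z hz => norm_fourierLaplace_integrand_deriv_le hR (hball z hz) x)
    (hf.norm.const_mul _) (.of_forall fun (x : ℝ) z _ => ?_)).2
  simpa [mul_comm] using ((hasDerivAt_id z).const_mul (-2 * π * I * x)).cexp.smul_const (f x)

theorem differentiable_fourierLaplace (hf : Integrable f) (hR : ∀ x, f x ≠ 0 → |x| ≤ R) :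
    Differentiable ℂ (fourierLaplace f) :=
  fun z => (hasDerivAt_fourierLaplace hf hR z).differentiableAt

theorem fourier_eq_zero_of_hasCompactSupport [CompleteSpace E] (hf : Integrable f)
    (hsupp : HasCompactSupport f) (hsupp' : HasCompactSupport (𝓕 f)) : 𝓕 f = 0 := by
  obtain ⟨R, hR⟩ := hsupp.exists_abs_le_of_ne_zero
  obtain ⟨R', hR'⟩ := hsupp'.exists_abs_le_of_ne_zero
  have hzero : fourierLaplace f = 0 :=
    (differentiable_fourierLaplace hf hR).eq_zero_of_forall_gt_ofReal fun w hw => by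
      rw [fourierLaplace_ofReal]
      by_contra hne
      exact (hw.trans_le (le_abs_self w)).not_ge (hR' w hne)
  funext w
  rw [← fourierLaplace_ofReal, hzero, Pi.zero_apply, Pi.zero_apply]

end FourierLaplace

theorem stmt18 (f : ℝ → ℂ) (hf : MemLp f 2 (volume : Measure ℝ))
    (hsupp : HasCompactSupport f)
    (hsupp' : HasCompactSupport (FourierTransform.fourier f)) :
    f =ᵐ[volume] 0 := by
  have hint : Integrable f := hf.integrable_of_hasCompactSupport one_le_two hsupp
  exact hint.ae_eq_zero_of_fourier_eq_zero
    (fourier_eq_zero_of_hasCompactSupport hint hsupp hsupp')
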